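/- arXiv:2601.17034 — 3 statements merged into one kernel-verified Lean document; each statement's English description precedes it below -/
import Mathlib

section
/- For real constants B ≥ 0, C > 0, x₂ > 0, and k with B k² < C (ensuring convergence), the Yukawa-form function satisfies exp(-x₂√(Bk²+C))/√(Bk²+C) = Σ_{n=0}^∞ √(2/π) · ((-1)ⁿ Bⁿ k^{2n} / n!) · 2^{-n} · x₂^{n+1/2} · C^{-n/2-1/4} · K_{n+1/2}(x₂√C), where K_ν denotes the modified Bessel function of the second kind. -/
/-!
Writing `K_ν(z) = ½ ∫_ℝ exp (ν t - z cosh t) dt`, the series `∑ bⁿ / n! · K_{ν+n}(z)`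
becomes, after summing the exponential series under the integral (dominated convergence,
valid for `|b| < z / 2`), `½ ∫_ℝ exp (ν t - (z/2 - b) eᵗ - (z/2) e⁻ᵗ) dt`; the shift
`t ↦ t + log r` with `r² = 1 - 2b/z` turns this back into `r^(-ν) K_ν(r z)`. For `ν = 1/2`
one has `K_{1/2}(w) = √(π / (2w)) e^(-w)`, and the choice `z = x₂ √C`,
`r = √((B k² + C) / C)` gives the claimed expansion.
-/

open MeasureTheory Real

/-- The modified Bessel function of the second kind (Macdonald function),
via its standard integral representation (valid for `x > 0`). -/
noncomputable def besselK (ν x : ℝ) : ℝ :=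
  ∫ t in Set.Ioi (0:ℝ), Real.exp (-x * Real.cosh t) * Real.cosh (ν * t)

open Set
open scoped Nat

lemma min_mul_sq_le_mul_exp_add_mul_exp_neg {a c : ℝ} (ha : 0 ≤ a) (hc : 0 ≤ c) (t : ℝ) :
    min a c * t ^ 2 / 2 ≤ a * exp t + c * exp (-t) := by
  have hm : 0 ≤ min a c := le_min ha hc
  rcases le_total 0 t with ht | ht
  · have := quadratic_le_exp_of_nonneg ht
    nlinarith [min_le_left a c, exp_pos t, exp_pos (-t), mul_nonneg hm ht]
  · have := quadratic_le_exp_of_nonneg (neg_nonneg.2 ht)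
    nlinarith [min_le_right a c, exp_pos t, exp_pos (-t), mul_nonneg hm (neg_nonneg.2 ht)]

lemma integrable_exp_mul_sub_mul_exp_sub_mul_exp_neg {a c : ℝ} (ha : 0 < a) (hc : 0 < c)
    (ν : ℝ) : Integrable fun t => exp (ν * t - a * exp t - c * exp (-t)) := by
  set m := min a c
  have hm : 0 < m := lt_min ha hc
  refine ((integrable_exp_neg_mul_sq (div_pos hm four_pos)).const_mul
    (exp (ν ^ 2 / m))).mono' (by fun_prop) (ae_of_all _ fun t => ?_)
  rw [norm_of_nonneg (exp_pos _).le, ← exp_add]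
  refine exp_le_exp.2 ?_
  have hquad := min_mul_sq_le_mul_exp_add_mul_exp_neg ha.le hc.le t
  have : ν * t ≤ ν ^ 2 / m + m / 4 * t ^ 2 := by
    rw [div_add' _ _ _ hm.ne', le_div_iff₀ hm]
    nlinarith [sq_nonneg (m * t / 2 - ν)]
  linarith

lemma integral_exp_neg_mul_cosh_mul_cosh (ν w : ℝ) :
    ∫ t, exp (-w * cosh t) * cosh (ν * t) = 2 * besselK ν w := by
  have heven (t : ℝ) : cosh (ν * |t|) = cosh (ν * t) := by
    rcases abs_choice t with h | h <;> simp [h]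
  simpa [cosh_abs, heven, besselK] using
    integral_comp_abs (f := fun t => exp (-w * cosh t) * cosh (ν * t))

lemma integral_exp_mul_sub_mul_cosh {w : ℝ} (hw : 0 < w) (ν : ℝ) :
    ∫ t, exp (ν * t - w * cosh t) = 2 * besselK ν w := by
  have hf : Integrable fun t => exp (ν * t - w * cosh t) := by
    convert integrable_exp_mul_sub_mul_exp_sub_mul_exp_neg (half_pos hw) (half_pos hw) ν
      using 3 with t
    rw [cosh_eq]; ring
  calc ∫ t, exp (ν * t - w * cosh t)
      = ∫ t, (exp (ν * t - w * cosh t) + exp (ν * -t - w * cosh (-t))) / 2 := by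
        rw [integral_div, integral_add hf hf.comp_neg,
          integral_neg_eq_self (fun t => exp (ν * t - w * cosh t)), add_self_div_two]
    _ = ∫ t, exp (-w * cosh t) * cosh (ν * t) := by
        congr 1 with t
        rw [cosh_neg, cosh_eq (ν * t), sub_eq_add_neg, sub_eq_add_neg, exp_add, exp_add]
        ring_nf
    _ = 2 * besselK ν w := integral_exp_neg_mul_cosh_mul_cosh ν w

lemma integral_exp_mul_sub_mul_exp_sub_mul_exp_neg {w r : ℝ} (hw : 0 < w) (hr : 0 < r)
    (ν : ℝ) :
    ∫ t, exp (ν * t - w / 2 * r * exp t - w / (2 * r) * exp (-t)) =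
      2 * r ^ (-ν) * besselK ν w := by
  have hshift (t : ℝ) : exp (ν * t - w / 2 * r * exp t - w / (2 * r) * exp (-t)) =
      exp (-(ν * log r)) * exp (ν * (t + log r) - w * cosh (t + log r)) := by
    have hpos : exp (t + log r) = r * exp t := by rw [exp_add, exp_log hr, mul_comm]
    have hneg : exp (-(t + log r)) = exp (-t) / r := by
      rw [neg_add, exp_add, exp_neg (log r), exp_log hr, div_eq_mul_inv]
    rw [← exp_add, cosh_eq, hpos, hneg]
    congr 1
    field_simp
    ring
  simp_rw [hshift]
  rw [integral_const_mul, integral_add_right_eq_self (fun s => exp (ν * s - w * cosh s)),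
    integral_exp_mul_sub_mul_cosh hw, rpow_def_of_pos hr]
  ring_nf

-- For `w ≤ 0` both sides are junk values `0`.
lemma besselK_one_half (w : ℝ) :
    besselK (1 / 2) w = √(π / (2 * w)) * exp (-w) := by
  have hderiv (t : ℝ) : HasDerivAt (fun t => sinh (t / 2)) (cosh (t / 2) / 2) t := by
    simpa [div_eq_mul_inv, mul_comm] using ((hasDerivAt_id t).div_const 2).sinh
  have hinj : InjOn (fun t => sinh (t / 2)) univ := fun s _ t _ h => by
    simpa using sinh_injective h
  have hrange : (fun t => sinh (t / 2)) '' univ = univ :=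
    image_univ_of_surjective fun s => ⟨2 * arsinh s, by simp⟩
  have hsubst := integral_image_eq_integral_abs_deriv_smul MeasurableSet.univ
    (fun t _ => (hderiv t).hasDerivWithinAt) hinj
    (fun s => 2 * exp (-w) * exp (-(2 * w) * s ^ 2))
  rw [hrange, setIntegral_univ, setIntegral_univ, integral_const_mul, integral_gaussian] at hsubst
  have hcosh (t : ℝ) : cosh t = 1 + 2 * sinh (t / 2) ^ 2 := by
    have := cosh_two_mul (t / 2)
    rw [mul_div_cancel₀ _ two_ne_zero, cosh_sq'] at this
    linarith
  have hintegrand (t : ℝ) :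
      |cosh (t / 2) / 2| • (2 * exp (-w) * exp (-(2 * w) * sinh (t / 2) ^ 2)) =
        exp (-w * cosh t) * cosh (1 / 2 * t) := by
    rw [abs_of_pos (by positivity), smul_eq_mul, hcosh t, one_div_mul_eq_div, mul_add, exp_add]
    ring_nf
  simp_rw [hintegrand, integral_exp_neg_mul_cosh_mul_cosh] at hsubst
  linarith

lemma hasSum_exp_pow_div_factorial (x : ℝ) : HasSum (fun n : ℕ => x ^ n / n !) (exp x) := by
  rw [exp_eq_exp_ℝ]
  exact NormedSpace.expSeries_div_hasSum_exp x

lemma hasSum_pow_div_factorial_mul_integral_exp {a b c : ℝ} (hb : |b| < a) (hc : 0 < c)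
    (ν : ℝ) :
    HasSum (fun n : ℕ => b ^ n / n ! * ∫ t, exp ((ν + n) * t - a * exp t - c * exp (-t)))
      (∫ t, exp (ν * t - (a - b) * exp t - c * exp (-t))) := by
  set E : ℝ → ℝ := fun t => exp (ν * t - a * exp t - c * exp (-t))
  have hterm (n : ℕ) (t : ℝ) : b ^ n / n ! * exp ((ν + n) * t - a * exp t - c * exp (-t)) =
      E t * ((b * exp t) ^ n / n !) := by
    rw [mul_pow, ← exp_nat_mul, mul_div_assoc', mul_left_comm, ← exp_add]
    ring_nf
  have hsum (b' : ℝ) (t : ℝ) : HasSum (fun n : ℕ => E t * ((b' * exp t) ^ n / n !))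
      (exp (ν * t - (a - b') * exp t - c * exp (-t))) := by
    have h := (hasSum_exp_pow_div_factorial (b' * exp t)).mul_left (E t)
    rwa [← exp_add, show ν * t - a * exp t - c * exp (-t) + b' * exp t =
      ν * t - (a - b') * exp t - c * exp (-t) by ring] at h
  simp_rw [← integral_const_mul, hterm]
  refine hasSum_integral_of_dominated_convergence (fun n t => E t * ((|b| * exp t) ^ n / n !))
    (fun n => by fun_prop) (fun n => ae_of_all _ fun t => ?_)
    (ae_of_all _ fun t => (hsum |b| t).summable) ?_ (ae_of_all _ (hsum b))
  · rw [norm_mul, norm_div, norm_pow, norm_mul, norm_of_nonneg (exp_pos _).le,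
      norm_of_nonneg (exp_pos _).le, Real.norm_natCast, Real.norm_eq_abs]
  · simp_rw [fun t => (hsum |b| t).tsum_eq]
    exact integrable_exp_mul_sub_mul_exp_sub_mul_exp_neg (by linarith) hc ν

/-- The multiplication theorem for `K_ν` (DLMF 10.44.2). -/
theorem hasSum_pow_div_factorial_mul_besselK_add_nat {z r : ℝ} (hz : 0 < z) (hr : 0 < r)
    (hr2 : r ^ 2 < 2) (ν : ℝ) :
    HasSum (fun n : ℕ => ((1 - r ^ 2) * z / 2) ^ n / n ! * besselK (ν + n) z)
      (r ^ (-ν) * besselK ν (r * z)) := by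
  have hb : |(1 - r ^ 2) * z / 2| < z / 2 := by
    rw [abs_lt]; constructor <;> nlinarith [mul_pos (pow_pos hr 2) hz]
  have hterm (n : ℕ) :
      ∫ t, exp ((ν + n) * t - z / 2 * exp t - z / 2 * exp (-t)) = 2 * besselK (ν + n) z := by
    simpa using integral_exp_mul_sub_mul_exp_sub_mul_exp_neg hz one_pos (ν + n)
  have hlimit : ∫ t, exp (ν * t - (z / 2 - (1 - r ^ 2) * z / 2) * exp t - z / 2 * exp (-t)) =
      2 * r ^ (-ν) * besselK ν (r * z) := by
    rw [← integral_exp_mul_sub_mul_exp_sub_mul_exp_neg (mul_pos hr hz) hr ν]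
    congr 1 with t
    congr 1
    field_simp
    ring
  have h := hasSum_pow_div_factorial_mul_integral_exp hb (half_pos hz) ν
  simp_rw [hterm, hlimit] at h
  rw [show r ^ (-ν) * besselK ν (r * z) = 2 * r ^ (-ν) * besselK ν (r * z) / 2 by ring]
  exact (h.div_const 2).congr_fun fun n => by ring

lemma two_rpow_neg_mul_rpow_mul_rpow (n : ℕ) {x C : ℝ} (hx : 0 < x) (hC : 0 < C) :
    (2 : ℝ) ^ (-(n : ℝ)) * x ^ ((n : ℝ) + 1 / 2) * C ^ (-(n : ℝ) / 2 - 1 / 4) =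
      (x / (2 * √C)) ^ n * √(x / √C) := by
  have hsqrt : √C ^ n = C ^ ((n : ℝ) / 2) := by
    rw [sqrt_eq_rpow, ← rpow_natCast, ← rpow_mul hC.le]; ring_nf
  have hfourth : √√C = C ^ (1 / 4 : ℝ) := by
    rw [sqrt_eq_rpow, sqrt_eq_rpow, ← rpow_mul hC.le]; norm_num
  rw [rpow_neg zero_le_two, rpow_natCast, rpow_add hx, rpow_natCast, ← sqrt_eq_rpow,
    show -(n : ℝ) / 2 - 1 / 4 = -((n : ℝ) / 2 + 1 / 4) by ring, rpow_neg hC.le,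
    rpow_add hC, ← hsqrt, ← hfourth, div_pow, mul_pow, sqrt_div hx.le]
  field_simp

lemma hasSum_pow_div_factorial_mul_besselK_one_half_add_nat {z r : ℝ} (hz : 0 < z)
    (hr : 0 < r) (hr2 : r ^ 2 < 2) :
    HasSum (fun n : ℕ => ((1 - r ^ 2) * z / 2) ^ n / n ! * besselK (1 / 2 + n) z)
      (√(π / (2 * z)) * exp (-(r * z)) / r) := by
  convert hasSum_pow_div_factorial_mul_besselK_add_nat hz hr hr2 (1 / 2) using 1
  rw [besselK_one_half, rpow_neg hr.le, ← sqrt_eq_rpow,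
    show π / (2 * (r * z)) = π / (2 * z) / r by ring, sqrt_div' _ hr.le]
  field_simp
  rw [sq_sqrt hr.le]

lemma hasSum_yukawa_besselK {u C x : ℝ} (hu : |u| < C) (hx : 0 < x) :
    HasSum (fun n : ℕ => √(2 / π) * √(x / √C) *
        ((-u * (x / (2 * √C))) ^ n / n ! * besselK (1 / 2 + n) (x * √C)))
      (exp (-x * √(u + C)) / √(u + C)) := by
  obtain ⟨hlow, hhigh⟩ := abs_lt.1 hu
  have hC : 0 < C := (abs_nonneg u).trans_lt hu
  have hsC : 0 < √C := sqrt_pos.2 hC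
  have hpC : 0 < (u + C) / C := div_pos (by linarith) hC
  have hr2 : √((u + C) / C) ^ 2 < 2 := by
    rw [sq_sqrt hpC.le, div_lt_iff₀ hC]
    linarith
  have hratio : (1 - √((u + C) / C) ^ 2) * (x * √C) / 2 = -u * (x / (2 * √C)) := by
    rw [sq_sqrt hpC.le]
    field_simp
    rw [sq_sqrt hC.le]
    ring
  have hargument : √((u + C) / C) * (x * √C) = x * √(u + C) := by
    rw [sqrt_div' _ hC.le]
    field_simp
  have hconst : √(2 / π) * √(x / √C) * √(π / (2 * (x * √C))) = 1 / √C := by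
    rw [← sqrt_mul (by positivity), ← sqrt_mul (by positivity),
      show 2 / π * (x / √C) * (π / (2 * (x * √C))) = 1 / C by
        field_simp
        rw [sq_sqrt hC.le],
      sqrt_div' _ hC.le, Real.sqrt_one]
  have hvalue : √(2 / π) * √(x / √C) *
      (√(π / (2 * (x * √C))) * exp (-(x * √(u + C))) / √((u + C) / C)) =
        exp (-x * √(u + C)) / √(u + C) := by
    rw [mul_div_assoc', ← mul_assoc, hconst, sqrt_div' _ hC.le, neg_mul]
    field_simp
  have h := hasSum_pow_div_factorial_mul_besselK_one_half_add_nat (mul_pos hx hsC)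
    (sqrt_pos.2 hpC) hr2
  rw [hratio, hargument] at h
  rw [← hvalue]
  exact h.mul_left _

theorem stmt0 (B C x₂ k : ℝ) (hB : 0 ≤ B) (hC : 0 < C) (hx : 0 < x₂)
    (hconv : B * k ^ 2 < C) :
    Real.exp (-x₂ * Real.sqrt (B * k ^ 2 + C)) / Real.sqrt (B * k ^ 2 + C) =
      ∑' n : ℕ, Real.sqrt (2 / π) * ((-1) ^ n * B ^ n * k ^ (2 * n) / n.factorial) *
        (2 : ℝ) ^ (-(n : ℝ)) * x₂ ^ ((n : ℝ) + 1 / 2) * C ^ (-(n : ℝ) / 2 - 1 / 4) *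
        besselK ((n : ℝ) + 1 / 2) (x₂ * Real.sqrt C) := by
  have hu : |B * k ^ 2| < C := by
    rw [abs_of_nonneg (by positivity)]
    exact hconv
  refine (HasSum.tsum_eq ((hasSum_yukawa_besselK hu hx).congr_fun fun n => ?_)).symm
  rw [add_comm (1 / 2 : ℝ), mul_pow, neg_pow]
  linear_combination (√(2 / π) * ((-1) ^ n * B ^ n * k ^ (2 * n) / n.factorial) *
    besselK ((n : ℝ) + 1 / 2) (x₂ * √C)) * two_rpow_neg_mul_rpow_mul_rpow n hx hC
end

section
/- For x₂ > 0 and η > 0, the three-dimensional integral ∫_{ℝ³} (e^{-η|x₁|}/|x₁|) · (e^{-η|x₁-x₂|}/|x₁-x₂|) d³x₁ equals 2π e^{-η x₂}/η. -/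
/-!
Move `y` to `(r, 0, 0)` by a reflection and use cylindrical coordinates `(z, s, θ)` around the
first axis. With `u = √(z² + s²)` and `v = √((z - r)² + s²)`, the substitution `t = u + v`
turns `s · (e^{-ηu}/u) (e^{-ηv}/v) ds` into `e^{-ηt}/t dt` on `t > |z| + |z - r|`, because
`dt/ds = s/u + s/v = s (u + v)/(u v)`. After exchanging the `z`- and `t`-integrals, the set of
`z` with `|z| + |z - r| < t` is an interval of length `t` (for `t > r`), which cancels `1/t` and
leaves `2π ∫_r^∞ e^{-ηt} dt = 2π e^{-ηr}/η`.
-/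

open MeasureTheory Real Set Filter
open scoped ENNReal

noncomputable def yukawa (η t : ℝ) : ℝ := exp (-η * t) / t

@[fun_prop]
theorem measurable_yukawa (η : ℝ) : Measurable (yukawa η) := by
  unfold yukawa; fun_prop

theorem mul_yukawa (η : ℝ) {t : ℝ} (ht : t ≠ 0) : t * yukawa η t = exp (-η * t) :=
  mul_div_cancel₀ _ ht

theorem yukawa_mul_yukawa (η : ℝ) {u v : ℝ} (hu : u ≠ 0) (hv : v ≠ 0) (huv : u + v ≠ 0) :
    yukawa η u * yukawa η v = (1 / u + 1 / v) * yukawa η (u + v) := by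
  simp only [yukawa, mul_add, exp_add]
  field_simp
  ring

theorem hasDerivAt_sqrt_sq_add_sq (a : ℝ) {s : ℝ} (hs : s ≠ 0) :
    HasDerivAt (fun s => √(a ^ 2 + s ^ 2)) (s / √(a ^ 2 + s ^ 2)) s := by
  have hpos : 0 < a ^ 2 + s ^ 2 := by positivity
  convert ((hasDerivAt_pow 2 s).const_add (a ^ 2)).sqrt hpos.ne' using 1
  field_simp
  ring

theorem strictMonoOn_sqrt_sq_add_sq (a : ℝ) :
    StrictMonoOn (fun s => √(a ^ 2 + s ^ 2)) (Ici 0) :=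
  fun s hs t _ hst => Real.sqrt_lt_sqrt (by positivity)
    (by nlinarith [mem_Ici.1 hs])

theorem lintegral_Ioi_mul_yukawa_mul_yukawa (η a b : ℝ) :
    ∫⁻ s in Ioi 0, ENNReal.ofReal s *
        ENNReal.ofReal (yukawa η √(a ^ 2 + s ^ 2) * yukawa η √(b ^ 2 + s ^ 2)) =
      ∫⁻ t in Ioi (|a| + |b|), ENNReal.ofReal (yukawa η t) := by
  set φ := fun s => √(a ^ 2 + s ^ 2) + √(b ^ 2 + s ^ 2)
  have hmono : StrictMonoOn φ (Ici 0) :=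
    (strictMonoOn_sqrt_sq_add_sq a).add (strictMonoOn_sqrt_sq_add_sq b)
  have htop : Tendsto φ atTop atTop := by
    refine tendsto_atTop_mono (fun s => ?_) tendsto_id
    have : s ≤ √(a ^ 2 + s ^ 2) := Real.le_sqrt_of_sq_le (by nlinarith)
    exact this.trans (le_add_of_nonneg_right (Real.sqrt_nonneg _))
  have himage : φ '' Ioi 0 = Ioi (|a| + |b|) := by
    rw [ContinuousOn.image_Ioi_of_strictMonoOn (by fun_prop) hmono htop]
    simp [φ, Real.sqrt_sq_eq_abs]
  rw [← himage, lintegral_image_eq_lintegral_abs_deriv_mul (f := φ) measurableSet_Ioi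
    (fun s hs => ((hasDerivAt_sqrt_sq_add_sq a (ne_of_gt hs)).add
      (hasDerivAt_sqrt_sq_add_sq b (ne_of_gt hs))).hasDerivWithinAt)
    (hmono.mono Ioi_subset_Ici_self).injOn]
  refine setLIntegral_congr_fun measurableSet_Ioi fun s (hs : 0 < s) => ?_
  have hu : 0 < √(a ^ 2 + s ^ 2) := Real.sqrt_pos.2 (by positivity)
  have hv : 0 < √(b ^ 2 + s ^ 2) := Real.sqrt_pos.2 (by positivity)
  rw [yukawa_mul_yukawa η hu.ne' hv.ne' (by positivity), abs_of_pos (by positivity),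
    ← ENNReal.ofReal_mul hs.le, ← ENNReal.ofReal_mul (by positivity)]
  congr 1
  ring

theorem lintegral_setLIntegral_Ioi_eq {α : Type*} [MeasurableSpace α] {μ : Measure α} [SFinite μ]
    {h : α → ℝ} (hh : Measurable h) {g : ℝ → ℝ≥0∞} (hg : Measurable g) :
    ∫⁻ a, (∫⁻ t in Ioi (h a), g t) ∂μ = ∫⁻ t, μ {a | h a < t} * g t := by
  simp_rw [← lintegral_indicator measurableSet_Ioi, indicator_apply, mem_Ioi]
  rw [lintegral_lintegral_swap
    ((Measurable.ite (measurableSet_lt (hh.comp measurable_fst) measurable_snd)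
      (hg.comp measurable_snd) measurable_const).aemeasurable)]
  refine lintegral_congr fun t => ?_
  rw [mul_comm, ← lintegral_indicator_const (measurableSet_lt hh measurable_const)]
  simp only [indicator_apply, mem_ofPred_eq]

theorem volume_setOf_abs_add_abs_sub_lt {r : ℝ} (hr : 0 ≤ r) (t : ℝ) :
    volume {z : ℝ | |z| + |z - r| < t} = (Ioi r).indicator ENNReal.ofReal t := by
  by_cases hrt : r < t
  · have hset : {z : ℝ | |z| + |z - r| < t} = Ioo ((r - t) / 2) ((r + t) / 2) := by
      ext z
      simp only [mem_ofPred_eq, mem_Ioo]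
      constructor
      · intro h
        constructor <;> cases abs_cases z <;> cases abs_cases (z - r) <;> linarith
      · rintro ⟨h₁, h₂⟩
        cases abs_cases z <;> cases abs_cases (z - r) <;> linarith
    rw [hset, Real.volume_Ioo, indicator_of_mem (mem_Ioi.2 hrt)]
    ring_nf
  · have hset : {z : ℝ | |z| + |z - r| < t} = ∅ := by
      refine eq_empty_of_forall_notMem fun z (hz : |z| + |z - r| < t) => hrt ?_
      calc r = |z - (z - r)| := by rw [sub_sub_cancel, abs_of_nonneg hr]
        _ ≤ |z| + |z - r| := abs_sub _ _
        _ < t := hz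
    rw [hset, measure_empty, indicator_of_notMem (by simpa using hrt)]

theorem lintegral_exp_neg_mul_Ioi {η : ℝ} (hη : 0 < η) (r : ℝ) :
    ∫⁻ t in Ioi r, ENNReal.ofReal (exp (-η * t)) = ENNReal.ofReal (exp (-η * r) / η) := by
  have hint : IntegrableOn (fun t => exp (-η * t)) (Ioi r) := by
    simpa only [neg_mul] using exp_neg_integrableOn_Ioi r hη
  rw [← ofReal_integral_eq_lintegral_ofReal hint (.of_forall fun t => (exp_pos _).le),
    integral_exp_mul_Ioi (by linarith), neg_div_neg_eq]

theorem lintegral_comp_sq_add_sq {g : ℝ → ℝ≥0∞} (hg : Measurable g) :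
    ∫⁻ p : ℝ × ℝ, g (p.1 ^ 2 + p.2 ^ 2) =
      ENNReal.ofReal (2 * π) * ∫⁻ s in Ioi 0, ENNReal.ofReal s * g (s ^ 2) := by
  rw [← lintegral_comp_polarCoord_symm]
  have hsq : ∀ p : ℝ × ℝ, (polarCoord.symm p).1 ^ 2 + (polarCoord.symm p).2 ^ 2 = p.1 ^ 2 := by
    intro p
    simp only [polarCoord_symm_apply]
    linear_combination p.1 ^ 2 * cos_sq_add_sin_sq p.2
  simp_rw [hsq, smul_eq_mul]
  rw [polarCoord_target, Measure.volume_eq_prod, ← Measure.prod_restrict,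
    lintegral_prod _ (by fun_prop)]
  simp_rw [setLIntegral_const, Real.volume_Ioo]
  rw [lintegral_mul_const' _ _ ENNReal.ofReal_ne_top, mul_comm]
  ring_nf

theorem EuclideanSpace.norm_fin_three (a b c : ℝ) :
    ‖!₂[a, b, c]‖ = √(a ^ 2 + (b ^ 2 + c ^ 2)) := by
  simp [EuclideanSpace.norm_eq, Fin.sum_univ_three, add_assoc]

theorem lintegral_euclideanSpace_fin_three {f : EuclideanSpace ℝ (Fin 3) → ℝ≥0∞}
    (hf : Measurable f) :
    ∫⁻ x, f x = ∫⁻ z : ℝ, ∫⁻ p : ℝ × ℝ, f !₂[z, p.1, p.2] := by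
  rw [← (PiLp.volume_preserving_toLp (Fin 3)).lintegral_comp hf,
    ← ((volume_preserving_piFinSuccAbove (fun _ : Fin 3 => ℝ) 0).symm _).lintegral_comp
      (by fun_prop),
    Measure.volume_eq_prod, lintegral_prod _ (by fun_prop)]
  refine lintegral_congr fun z => ?_
  rw [← ((volume_preserving_finTwoArrow ℝ).symm _).lintegral_comp (by fun_prop)]
  refine lintegral_congr fun p => congrArg f ?_
  ext i
  fin_cases i <;> simp [MeasurableEquiv.piFinSuccAbove_symm_apply, Fin.insertNthEquiv]

theorem lintegral_norm_norm_sub_eq_of_norm_eq {E : Type*} [NormedAddCommGroup E]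
    [InnerProductSpace ℝ E] [FiniteDimensional ℝ E] [MeasurableSpace E] [BorelSpace E]
    (F : ℝ → ℝ → ℝ≥0∞) {y y' : E} (h : ‖y‖ = ‖y'‖) :
    ∫⁻ x, F ‖x‖ ‖x - y‖ = ∫⁻ x, F ‖x‖ ‖x - y'‖ := by
  set R := Submodule.reflection (ℝ ∙ (y' - y))ᗮ
  have hR : R y' = y := Submodule.reflection_sub h.symm
  rw [← (R.measurePreserving).lintegral_comp_emb R.toHomeomorph.measurableEmbedding]
  simp only [← hR, ← map_sub, LinearIsometryEquiv.norm_map]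

theorem lintegral_yukawa_mul_yukawa_sub_fin_three {η : ℝ} (hη : 0 < η) {r : ℝ} (hr : 0 ≤ r) :
    ∫⁻ x, ENNReal.ofReal (yukawa η ‖x‖ * yukawa η ‖x - !₂[r, 0, 0]‖) =
      ENNReal.ofReal (2 * π * exp (-η * r) / η) := by
  have hsub : ∀ z a b : ℝ, !₂[z, a, b] - !₂[r, 0, 0] = !₂[z - r, a, b] := by
    intro z a b; ext i; fin_cases i <;> simp
  have hm : Measurable fun x : EuclideanSpace ℝ (Fin 3) =>
      ENNReal.ofReal (yukawa η ‖x‖ * yukawa η ‖x - !₂[r, 0, 0]‖) := by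
    fun_prop
  have hcyl : ∀ z : ℝ, ∫⁻ p : ℝ × ℝ, ENNReal.ofReal (yukawa η √(z ^ 2 + (p.1 ^ 2 + p.2 ^ 2)) *
      yukawa η √((z - r) ^ 2 + (p.1 ^ 2 + p.2 ^ 2))) =
      ENNReal.ofReal (2 * π) * ∫⁻ t in Ioi (|z| + |z - r|), ENNReal.ofReal (yukawa η t) := by
    intro z
    rw [lintegral_comp_sq_add_sq (g := fun q => ENNReal.ofReal (yukawa η √(z ^ 2 + q) *
      yukawa η √((z - r) ^ 2 + q))) (by fun_prop), lintegral_Ioi_mul_yukawa_mul_yukawa]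
  have hexp : ∀ t ∈ Ioi r, ENNReal.ofReal t * ENNReal.ofReal (yukawa η t) =
      ENNReal.ofReal (exp (-η * t)) := fun t (ht : r < t) => by
    rw [← ENNReal.ofReal_mul (hr.trans ht.le), mul_yukawa η (hr.trans_lt ht).ne']
  rw [lintegral_euclideanSpace_fin_three hm]
  simp only [hsub, EuclideanSpace.norm_fin_three, hcyl]
  rw [lintegral_const_mul' _ _ ENNReal.ofReal_ne_top,
    lintegral_setLIntegral_Ioi_eq (by fun_prop) (by fun_prop)]
  simp_rw [volume_setOf_abs_add_abs_sub_lt hr,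
    ← indicator_mul_left (Ioi r) ENNReal.ofReal fun t => ENNReal.ofReal (yukawa η t)]
  rw [lintegral_indicator measurableSet_Ioi, setLIntegral_congr_fun measurableSet_Ioi hexp,
    lintegral_exp_neg_mul_Ioi hη, ← ENNReal.ofReal_mul (by positivity), mul_div_assoc]

theorem lintegral_yukawa_mul_yukawa {η : ℝ} (hη : 0 < η) (y : EuclideanSpace ℝ (Fin 3)) :
    ∫⁻ x, ENNReal.ofReal (yukawa η ‖x‖ * yukawa η ‖x - y‖) =
      ENNReal.ofReal (2 * π * exp (-η * ‖y‖) / η) := by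
  have hy : ‖y‖ = ‖!₂[‖y‖, 0, 0]‖ := by
    simp [EuclideanSpace.norm_fin_three, Real.sqrt_sq (norm_nonneg y)]
  rw [lintegral_norm_norm_sub_eq_of_norm_eq
      (fun a b => ENNReal.ofReal (yukawa η a * yukawa η b)) hy,
    lintegral_yukawa_mul_yukawa_sub_fin_three hη (norm_nonneg y)]

theorem stmt5_general (η : ℝ) (hη : 0 < η) (y : EuclideanSpace ℝ (Fin 3)) :
    ∫ x₁ : EuclideanSpace ℝ (Fin 3),
        Real.exp (-η * ‖x₁‖) / ‖x₁‖ * (Real.exp (-η * ‖x₁ - y‖) / ‖x₁ - y‖) =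
      2 * π * Real.exp (-η * ‖y‖) / η := by
  change ∫ x, yukawa η ‖x‖ * yukawa η ‖x - y‖ = _
  have hnonneg : ∀ x : EuclideanSpace ℝ (Fin 3), 0 ≤ yukawa η ‖x‖ * yukawa η ‖x - y‖ :=
    fun x => by unfold yukawa; positivity
  rw [integral_eq_lintegral_of_nonneg_ae (.of_forall hnonneg) (by fun_prop),
    lintegral_yukawa_mul_yukawa hη y, ENNReal.toReal_ofReal (by positivity)]

theorem stmt5 (η : ℝ) (hη : 0 < η) (y : EuclideanSpace ℝ (Fin 3)) (hy : 0 < ‖y‖) :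
    ∫ x₁ : EuclideanSpace ℝ (Fin 3),
        Real.exp (-η * ‖x₁‖) / ‖x₁‖ * (Real.exp (-η * ‖x₁ - y‖) / ‖x₁ - y‖) =
      2 * π * Real.exp (-η * ‖y‖) / η :=
  stmt5_general η hη y
end

section
/- For real constants B, C, x₂ > 0 with Bk² < C, differentiating the Theorem 1 series in x₂ yields: exp(-x₂√(Bk²+C)) = Σ_{n=0}^∞ √(2/π) · ((-1)ⁿ Bⁿ k^{2n}/n!) · 2^{-n} · x₂^{n+1/2} · C^{1/4 − n/2} · K_{n−1/2}(x₂√C). -/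
open MeasureTheory Real

/-!
Since `∫_ℝ exp (-z cosh t + ν t) dt = 2 K_ν(z)`, expanding `exp (a eᵗ)` in
`∫_ℝ exp (a eᵗ - z cosh t - t/2) dt` and integrating termwise gives
`∑ aⁿ/n! · 2 K_{n-1/2}(z)`; dominated convergence applies as soon as `2|a| < z`.
On the other hand `a eᵗ - z cosh t = -w cosh (t + s)` with `w = √(z (z - 2a))`, so after a
translation the integral is a multiple of `K_{-1/2}(w) = √(π/(2w)) e^{-w}`, and the substitution
`u = sinh (t/2)` turns `K_{-1/2}` into a Gaussian integral.
The theorem is the case `z = x₂ √C`, `a = -B k² x₂ / (2 √C)`.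
-/

open Set Filter

lemma cosh_eq_one_add_two_mul_sinh_half_sq (t : ℝ) : cosh t = 1 + 2 * sinh (t / 2) ^ 2 := by
  conv_lhs => rw [← mul_div_cancel₀ t two_ne_zero, cosh_two_mul, cosh_sq]
  ring

lemma one_add_sq_div_two_le_cosh (t : ℝ) : 1 + t ^ 2 / 2 ≤ cosh t := by
  have habs : |t / 2| ≤ |sinh (t / 2)| := by
    rw [abs_sinh]
    exact self_le_sinh_iff.2 (abs_nonneg _)
  have hsq : (t / 2) ^ 2 ≤ sinh (t / 2) ^ 2 := sq_le_sq.2 habs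
  rw [cosh_eq_one_add_two_mul_sinh_half_sq]
  linarith

lemma integrable_exp_neg_mul_cosh_add_mul {z : ℝ} (hz : 0 < z) (ν : ℝ) :
    Integrable fun t => exp (-z * cosh t + ν * t) := by
  refine ((integrable_exp_neg_mul_sq (by positivity : 0 < z / 4)).const_mul
    (exp (ν ^ 2 / z))).mono' (by fun_prop) (Eventually.of_forall fun t => ?_)
  have hcosh : z * (1 + t ^ 2 / 2) ≤ z * cosh t :=
    mul_le_mul_of_nonneg_left (one_add_sq_div_two_le_cosh t) hz.le
  have hamgm : ν * t ≤ z / 4 * t ^ 2 + ν ^ 2 / z := by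
    have : z / 4 * t ^ 2 + ν ^ 2 / z - ν * t = (z * t - 2 * ν) ^ 2 / (4 * z) := by
      field_simp; ring
    nlinarith [this, (by positivity : 0 ≤ (z * t - 2 * ν) ^ 2 / (4 * z))]
  rw [norm_of_nonneg (exp_pos _).le, ← exp_add, exp_le_exp]
  nlinarith

lemma integral_exp_neg_mul_cosh_add_mul {z : ℝ} (hz : 0 < z) (ν : ℝ) :
    ∫ t, exp (-z * cosh t + ν * t) = 2 * besselK ν z := by
  have hint := integrable_exp_neg_mul_cosh_add_mul hz ν
  rw [← intervalIntegral.integral_Iic_add_Ioi (b := 0) hint.integrableOn hint.integrableOn,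
    ← neg_zero, ← integral_comp_neg_Ioi, neg_zero,
    ← integral_add (hint.comp_neg).integrableOn hint.integrableOn, besselK,
    ← integral_const_mul]
  refine setIntegral_congr_fun measurableSet_Ioi fun t _ => ?_
  simp only [cosh_neg, cosh_eq (ν * t), mul_neg, exp_add]
  ring

lemma image_sinh_div_two_Ioi_zero : (fun t => sinh (t / 2)) '' Ioi 0 = Ioi 0 := by
  ext s
  simp only [mem_image, mem_Ioi]
  constructor
  · rintro ⟨t, ht, rfl⟩
    exact sinh_pos_iff.2 (half_pos ht)
  · intro hs
    refine ⟨2 * arsinh s, mul_pos two_pos (arsinh_pos_iff.2 hs), ?_⟩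
    rw [mul_div_cancel_left₀ _ two_ne_zero, sinh_arsinh]

lemma besselK_neg_half (z : ℝ) : besselK (-1 / 2) z = √(π / (2 * z)) * exp (-z) := by
  have hsubst := integral_image_eq_integral_abs_deriv_smul (s := Ioi 0)
    (f := fun t => sinh (t / 2)) measurableSet_Ioi
    (fun t _ => (((hasDerivAt_id' t).div_const 2).sinh).hasDerivWithinAt)
    (sinh_strictMono.comp (strictMono_id.div_const two_pos)).injective.injOn
    (fun s => exp (-(2 * z) * s ^ 2))
  rw [image_sinh_div_two_Ioi_zero, integral_gaussian_Ioi] at hsubst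
  rw [besselK, ← div_mul_cancel₀ √(π / (2 * z)) (two_ne_zero' ℝ), hsubst, mul_assoc, mul_comm,
    ← integral_const_mul]
  refine setIntegral_congr_fun measurableSet_Ioi fun t _ => ?_
  rw [smul_eq_mul, abs_of_pos (by positivity), show -1 / 2 * t = -(t / 2) by ring, cosh_neg,
    cosh_eq_one_add_two_mul_sinh_half_sq,
    show -z * (1 + 2 * sinh (t / 2) ^ 2) = -z + -(2 * z) * sinh (t / 2) ^ 2 by ring, exp_add]
  ring

lemma mul_exp_sub_mul_cosh_eq {a z : ℝ} (hz : 0 < z) (ha : 2 * a < z) (t : ℝ) :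
    a * exp t - z * cosh t =
      -(√z * √(z - 2 * a)) * cosh (t + (log √(z - 2 * a) - log √z)) := by
  have hr2 := sq_sqrt (by linarith : 0 ≤ z - 2 * a)
  have hρ2 := sq_sqrt hz.le
  have hr : 0 < √(z - 2 * a) := sqrt_pos.2 (by linarith)
  have hρ : 0 < √z := sqrt_pos.2 hz
  rw [cosh_eq, cosh_eq, neg_add, exp_add, exp_add, exp_sub, exp_neg, exp_neg, exp_sub,
    exp_log hr, exp_log hρ]
  generalize √(z - 2 * a) = r at *
  generalize √z = ρ at *
  field_simp
  linear_combination exp t ^ 2 * hr2 + hρ2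

lemma integrable_exp_mul_exp_sub_mul_cosh_add_mul {a z : ℝ} (hz : 0 < z) (ha : 2 * a < z)
    (ν : ℝ) : Integrable fun t => exp (a * exp t - z * cosh t + ν * t) := by
  set s := log √(z - 2 * a) - log √z
  have hshift : ∀ t, a * exp t - z * cosh t = -(√z * √(z - 2 * a)) * cosh (t + s) :=
    mul_exp_sub_mul_cosh_eq hz ha
  have hw : 0 < √z * √(z - 2 * a) := mul_pos (sqrt_pos.2 hz) (sqrt_pos.2 (by linarith))
  refine (((integrable_exp_neg_mul_cosh_add_mul hw ν).comp_add_right s).const_mul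
    (exp (-(ν * s)))).congr (Eventually.of_forall fun t => ?_)
  simp only [hshift, ← exp_add]
  ring_nf

lemma integral_exp_mul_exp_sub_mul_cosh_add_neg_half_mul {a z : ℝ} (hz : 0 < z)
    (ha : 2 * a < z) :
    ∫ t, exp (a * exp t - z * cosh t + (-1 / 2) * t) =
      2 * √(π / (2 * z)) * exp (-√(z * (z - 2 * a))) := by
  set s := log √(z - 2 * a) - log √z
  have hshift : ∀ t, a * exp t - z * cosh t = -(√z * √(z - 2 * a)) * cosh (t + s) :=
    mul_exp_sub_mul_cosh_eq hz ha
  have hw : 0 < √z * √(z - 2 * a) := mul_pos (sqrt_pos.2 hz) (sqrt_pos.2 (by linarith))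
  calc ∫ t, exp (a * exp t - z * cosh t + (-1 / 2) * t)
      = ∫ t, exp (s / 2) * exp (-(√z * √(z - 2 * a)) * cosh (t + s) + (-1 / 2) * (t + s)) := by
        refine integral_congr_ae (Eventually.of_forall fun t => ?_)
        simp only [hshift, ← exp_add]
        ring_nf
    _ = exp (s / 2) * (2 * besselK (-1 / 2) (√z * √(z - 2 * a))) := by
        rw [integral_const_mul, integral_add_right_eq_self
          (fun u => exp (-(√z * √(z - 2 * a)) * cosh u + (-1 / 2) * u)),
          integral_exp_neg_mul_cosh_add_mul hw]
    _ = 2 * √(π / (2 * z)) * exp (-√(z * (z - 2 * a))) := by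
        have hr : 0 < √(z - 2 * a) := sqrt_pos.2 (by linarith)
        have hρ : 0 < √z := sqrt_pos.2 hz
        have hconst : exp (s / 2) * √(π / (2 * (√z * √(z - 2 * a)))) = √(π / (2 * z)) := by
          rw [exp_half, exp_sub, exp_log hr, exp_log hρ, ← sqrt_mul (by positivity)]
          congr 1
          field_simp
          rw [sq_sqrt hz.le]
        rw [besselK_neg_half, sqrt_mul hz.le, ← hconst]
        ring

lemma hasSum_pow_div_factorial_mul_besselK_sub_half {a z : ℝ} (hz : 0 < z)
    (ha : 2 * |a| < z) :
    HasSum (fun n : ℕ => a ^ n / n.factorial * besselK (n - 1 / 2) z)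
      (√(π / (2 * z)) * exp (-√(z * (z - 2 * a)))) := by
  have hseries : ∀ b t, HasSum
      (fun n : ℕ => (b * exp t) ^ n / n.factorial * exp (-z * cosh t + (-1 / 2) * t))
      (exp (b * exp t - z * cosh t + (-1 / 2) * t)) := fun b t => by
    have h := (NormedSpace.expSeries_div_hasSum_exp (b * exp t)).mul_right
      (exp (-z * cosh t + (-1 / 2) * t))
    have hassoc : b * exp t - z * cosh t + (-1 / 2) * t =
        b * exp t + (-z * cosh t + (-1 / 2) * t) := by
      ring
    simpa only [← exp_eq_exp_ℝ, ← exp_add, hassoc] using h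
  have hterm : ∀ n : ℕ,
      ∫ t, (a * exp t) ^ n / n.factorial * exp (-z * cosh t + (-1 / 2) * t) =
        2 * (a ^ n / n.factorial * besselK (n - 1 / 2) z) := fun n => by
    rw [mul_left_comm, ← integral_exp_neg_mul_cosh_add_mul hz, ← integral_const_mul]
    refine integral_congr_ae (Eventually.of_forall fun t => ?_)
    have hsplit : exp (-z * cosh t + (n - 1 / 2) * t) =
        exp (n * t) * exp (-z * cosh t + (-1 / 2) * t) := by
      rw [← exp_add]; ring_nf
    dsimp only
    rw [hsplit, mul_pow, ← exp_nat_mul]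
    ring
  have hsum := hasSum_integral_of_dominated_convergence
    (fun (n : ℕ) t => (|a| * exp t) ^ n / n.factorial * exp (-z * cosh t + (-1 / 2) * t))
    (fun n => by fun_prop)
    (fun n => Eventually.of_forall fun t => by
      simp [norm_mul, norm_pow, norm_div, abs_of_pos (exp_pos _)])
    (Eventually.of_forall fun t => (hseries |a| t).summable)
    ((integrable_exp_mul_exp_sub_mul_cosh_add_mul hz ha _).congr
      (Eventually.of_forall fun t => (hseries |a| t).tsum_eq.symm))
    (Eventually.of_forall (hseries a))
  simp only [hterm] at hsum
  rw [integral_exp_mul_exp_sub_mul_cosh_add_neg_half_mul hz (by linarith [le_abs_self a])] at hsum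
  simpa only [mul_assoc, mul_div_cancel_left₀ _ (two_ne_zero' ℝ)] using hsum.div_const 2

lemma coeff_eq_mul_pow_div_factorial {B C x k : ℝ} (hC : 0 < C) (hx : 0 < x) (n : ℕ) :
    √(2 / π) * ((-1) ^ n * B ^ n * k ^ (2 * n) / n.factorial) * (2 : ℝ) ^ (-(n : ℝ)) *
        x ^ ((n : ℝ) + 1 / 2) * C ^ ((1 : ℝ) / 4 - (n : ℝ) / 2) =
      √(2 / π) * √x * √√C * ((-(B * k ^ 2 * x) / (2 * √C)) ^ n / n.factorial) := by
  have hsC : 0 < √C := sqrt_pos.2 hC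
  rw [rpow_neg two_pos.le, rpow_natCast, rpow_add hx, rpow_natCast, ← sqrt_eq_rpow,
    rpow_sub hC, show (1 : ℝ) / 4 = 1 / 2 * (1 / 2) by norm_num, rpow_mul hC.le,
    show (n : ℝ) / 2 = 1 / 2 * n by ring, rpow_mul hC.le, rpow_natCast, ← sqrt_eq_rpow,
    ← sqrt_eq_rpow, div_pow, neg_pow (B * k ^ 2 * x), mul_pow, mul_pow, mul_pow, ← pow_mul]
  field_simp

theorem stmt16 (B C x₂ k : ℝ) (hB : 0 < B) (hC : 0 < C) (hx : 0 < x₂)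
    (hconv : B * k ^ 2 < C) :
    Real.exp (-x₂ * Real.sqrt (B * k ^ 2 + C)) =
      ∑' n : ℕ, Real.sqrt (2 / π) * ((-1) ^ n * B ^ n * k ^ (2 * n) / n.factorial) *
        (2 : ℝ) ^ (-(n : ℝ)) * x₂ ^ ((n : ℝ) + 1 / 2) * C ^ ((1 : ℝ) / 4 - (n : ℝ) / 2) *
        besselK ((n : ℝ) - 1 / 2) (x₂ * Real.sqrt C) := by
  have hsC : 0 < √C := sqrt_pos.2 hC
  have hz : 0 < x₂ * √C := by positivity
  have ha : 2 * |-(B * k ^ 2 * x₂) / (2 * √C)| < x₂ * √C := by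
    rw [abs_div, abs_neg, abs_of_nonneg (by positivity), abs_of_pos (by positivity),
      mul_div_assoc', div_lt_iff₀ (by positivity)]
    nlinarith [mul_self_sqrt hC.le]
  have hexponent : √(x₂ * √C * (x₂ * √C - 2 * (-(B * k ^ 2 * x₂) / (2 * √C)))) =
      x₂ * √(B * k ^ 2 + C) := by
    rw [← sqrt_sq (by positivity : 0 ≤ x₂ * √(B * k ^ 2 + C)), mul_pow,
      sq_sqrt (by positivity : 0 ≤ B * k ^ 2 + C)]
    congr 1
    field_simp
    rw [sq_sqrt hC.le]
    ring
  have hconst : √(2 / π) * √x₂ * √√C * √(π / (2 * (x₂ * √C))) = 1 := by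
    rw [← sqrt_mul (by positivity), ← sqrt_mul (by positivity), ← sqrt_mul (by positivity),
      sqrt_eq_one]
    field_simp
  simp only [coeff_eq_mul_pow_div_factorial hC hx, mul_assoc (√(2 / π) * √x₂ * √√C)]
  rw [((hasSum_pow_div_factorial_mul_besselK_sub_half hz ha).mul_left
    (√(2 / π) * √x₂ * √√C)).tsum_eq, ← mul_assoc, hconst, one_mul, hexponent, neg_mul]
end
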